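/- Let ω, a ∈ ℝ³ with θ = ‖ω‖ ≠ 0, g ∈ ℝ, a_g = (0,0,g), and Ω = [ω]^∧. Let A_M and A_N be the 3×2 matrices with columns (a_g, 0) and (a, 0) respectively, B = [[0,1],[0,0]], M = [[0₃ₓ₃, A_M],[0₂ₓ₃, −B]], N = [[Ω, A_N],[0₂ₓ₃, B]]. Let R₀ be a 3×3 real matrix, P₀ the 3×2 matrix with columns (v₀, p₀) for v₀, p₀ ∈ ℝ³, and X₀ = [[R₀, P₀],[0₂ₓ₃, I₂]]. Then for every t ∈ ℝ, exp(tM) · X₀ · exp(tN) = [[R₀·exp(tΩ), R₀·P_N(t) + (P₀ + P_M(t))·(I₂ + tB)],[0₂ₓ₃, I₂]], where P_M(t) is the 3×2 matrix with columns (t·a_g, −(t²/2)·a_g) and P_N(t) is the 3×2 matrix whose first column is ( t·I₃ + ((1 − cos(θt))/θ²)·Ω + ((θt − sin(θt))/θ³)·Ω² )·a and whose second column is ( (t²/2)·I₃ + ((θt − sin(θt))/θ³)·Ω + ((θ²t²/2 − 1 + cos(θt))/θ⁴)·Ω² )·a. -/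

import Mathlib

open Matrix

/-- The hat map `[ω]^∧`: the skew-symmetric matrix satisfying `([ω]^∧) x = ω × x`. -/
noncomputable def hat (ω : EuclideanSpace ℝ (Fin 3)) : Matrix (Fin 3) (Fin 3) ℝ :=
  !![0, -ω 2, ω 1; ω 2, 0, -ω 0; -ω 1, ω 0, 0]

/-- The 3×2 matrix with the two given columns. -/
noncomputable def cols (u w : Fin 3 → ℝ) : Matrix (Fin 3) (Fin 2) ℝ :=
  Matrix.of fun i j => ![u i, w i] j

/-!
Both exponents are block upper triangular, `fromBlocks A B 0 D`, with `D * D = 0`.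
For such a matrix the top-right block of the `(k + 2)`-nd power is `A ^ k * (A * B + B * D)`,
so the top-right block of `exp (t • _)` is `t • B + V * (A * B + B * D)` with
`V = ∑ t ^ (k + 2) / (k + 2)! • A ^ k`. For `M` the diagonal block vanishes and `V = t ^ 2 / 2`;
for `N` the relation `Ω ^ 3 = -θ ^ 2 • Ω` folds `V` into a combination of `1`, `Ω`, `Ω ^ 2`
whose coefficients are tails of the sine and cosine series. Multiplying out the three blocks,
`(1 - t • B) * (1 + t • B) = 1` gives the identity block.
-/

open scoped Nat

section BlockMatrices

variable {ι l m n o α : Type*}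

theorem HasSum.matrix_fromBlocks [AddCommMonoid α] [TopologicalSpace α] [ContinuousAdd α]
    {A : ι → Matrix n l α} {B : ι → Matrix n m α} {C : ι → Matrix o l α}
    {D : ι → Matrix o m α} {a : Matrix n l α} {b : Matrix n m α} {c : Matrix o l α}
    {d : Matrix o m α} (hA : HasSum A a) (hB : HasSum B b) (hC : HasSum C c) (hD : HasSum D d) :
    HasSum (fun x => fromBlocks (A x) (B x) (C x) (D x)) (fromBlocks a b c d) :=
  let blocks : (Matrix n l α × Matrix n m α) × Matrix o l α × Matrix o m α →+
      Matrix (n ⊕ o) (l ⊕ m) α :=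
    { toFun := fun p => fromBlocks p.1.1 p.1.2 p.2.1 p.2.2
      map_zero' := fromBlocks_zero
      map_add' := fun _ _ => (fromBlocks_add ..).symm }
  ((hA.prodMk hB).prodMk (hC.prodMk hD)).map blocks <|
    Continuous.matrix_fromBlocks (by fun_prop) (by fun_prop) (by fun_prop) (by fun_prop)

theorem NormedSpace.exp_eq_one_add_of_mul_self_eq_zero {𝔸 : Type*} [Ring 𝔸] [Algebra ℚ 𝔸]
    [TopologicalSpace 𝔸] [IsTopologicalRing 𝔸] [T2Space 𝔸] {x : 𝔸} (hx : x * x = 0) :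
    NormedSpace.exp x = 1 + x := by
  rw [NormedSpace.exp_eq_tsum_rat]
  beta_reduce
  rw [tsum_eq_sum (s := Finset.range 2) fun k hk => ?_]
  · simp [Finset.sum_range_succ]
  · obtain ⟨k, rfl⟩ : ∃ j, k = j + 2 := ⟨k - 2, by simp at hk; omega⟩
    rw [pow_add, sq, hx, mul_zero, smul_zero]

variable [Fintype l] [Fintype m] [DecidableEq l] [DecidableEq m]

theorem fromBlocks_zero₂₁_pow [CommRing α] (A : Matrix l l α) (B : Matrix l m α)
    (D : Matrix m m α) (k : ℕ) :
    fromBlocks A B 0 D ^ k = fromBlocks (A ^ k) (fromBlocks A B 0 D ^ k).toBlocks₁₂ 0 (D ^ k) := by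
  induction k with
  | zero => rw [pow_zero, pow_zero, pow_zero, ← fromBlocks_one, toBlocks_fromBlocks₁₂]
  | succ k ih =>
    rw [pow_succ, ih, fromBlocks_multiply]
    simp [pow_succ]

theorem toBlocks₁₂_fromBlocks_zero₂₁_pow_add_two [CommRing α] {A : Matrix l l α}
    {B : Matrix l m α} {D : Matrix m m α} (hD : D * D = 0) (k : ℕ) :
    (fromBlocks A B 0 D ^ (k + 2)).toBlocks₁₂ = A ^ k * (A * B + B * D) := by
  induction k with
  | zero => simp [sq, fromBlocks_multiply]
  | succ k ih =>
    rw [pow_succ, fromBlocks_zero₂₁_pow, fromBlocks_multiply, toBlocks_fromBlocks₁₂, ih]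
    simp only [Matrix.mul_add, Matrix.add_mul, Matrix.mul_assoc, hD, Matrix.mul_zero, add_zero,
      pow_succ]

theorem Matrix.exp_series_hasSum_exp (X : Matrix l l ℝ) :
    HasSum (fun k => (k ! : ℝ)⁻¹ • X ^ k) (NormedSpace.exp X) := by
  open scoped Matrix.Norms.Operator in exact NormedSpace.exp_series_hasSum_exp' X

theorem hasSum_toBlocks₁₂_exp_series (t : ℝ) (A : Matrix l l ℝ) (B : Matrix l m ℝ)
    {D : Matrix m m ℝ} (hD : D * D = 0) {V : Matrix l l ℝ}
    (hV : HasSum (fun k => (t ^ (k + 2) / (k + 2)!) • A ^ k) V) :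
    HasSum (fun k => (k ! : ℝ)⁻¹ • (fromBlocks (t • A) (t • B) 0 (t • D) ^ k).toBlocks₁₂)
      (t • B + V * (A * B + B * D)) := by
  have htD : (t • D) * (t • D) = 0 := by rw [smul_mul_smul_comm, hD, smul_zero]
  rw [← hasSum_nat_add_iff' 2]
  have hterm : (fun k => ((k + 2)! : ℝ)⁻¹ •
        (fromBlocks (t • A) (t • B) 0 (t • D) ^ (k + 2)).toBlocks₁₂) =
      fun k => ((t ^ (k + 2) / (k + 2)!) • A ^ k) * (A * B + B * D) := by
    funext k
    simp only [toBlocks₁₂_fromBlocks_zero₂₁_pow_add_two htD, smul_pow, Matrix.smul_mul,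
      Matrix.mul_smul, smul_smul, ← smul_add]
    congr 1
    ring
  have hfirst : t • B + V * (A * B + B * D) - ∑ i ∈ Finset.range 2,
        (i ! : ℝ)⁻¹ • (fromBlocks (t • A) (t • B) 0 (t • D) ^ i).toBlocks₁₂ =
      V * (A * B + B * D) := by
    simp [Finset.sum_range_succ, ← fromBlocks_one]
  rw [hterm, hfirst]
  exact hV.map (mulRightLinearMap l ℝ (A * B + B * D)) (continuous_id.matrix_mul continuous_const)

theorem exp_smul_fromBlocks_zero₂₁ (t : ℝ) (A : Matrix l l ℝ) (B : Matrix l m ℝ)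
    {D : Matrix m m ℝ} (hD : D * D = 0) {V : Matrix l l ℝ}
    (hV : HasSum (fun k => (t ^ (k + 2) / (k + 2)!) • A ^ k) V) :
    NormedSpace.exp (t • fromBlocks A B 0 D) =
      fromBlocks (NormedSpace.exp (t • A)) (t • B + V * (A * B + B * D)) 0 (1 + t • D) := by
  have htD : (t • D) * (t • D) = 0 := by rw [smul_mul_smul_comm, hD, smul_zero]
  rw [← NormedSpace.exp_eq_one_add_of_mul_self_eq_zero htD, fromBlocks_smul, smul_zero]
  refine (Matrix.exp_series_hasSum_exp _).unique ?_
  convert (Matrix.exp_series_hasSum_exp (t • A)).matrix_fromBlocks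
    (hasSum_toBlocks₁₂_exp_series t A B hD hV) hasSum_zero (Matrix.exp_series_hasSum_exp (t • D))
    using 2 with k
  rw [fromBlocks_zero₂₁_pow, fromBlocks_smul, smul_zero, toBlocks_fromBlocks₁₂]

theorem exp_smul_fromBlocks_zero₁₁_zero₂₁ (t : ℝ) (B : Matrix l m ℝ) {D : Matrix m m ℝ}
    (hD : D * D = 0) :
    NormedSpace.exp (t • fromBlocks 0 B 0 D) =
      fromBlocks (1 : Matrix l l ℝ) (t • B + (t ^ 2 / 2) • (B * D)) 0 (1 + t • D) := by
  have hV : HasSum (fun k => (t ^ (k + 2) / (k + 2)!) • (0 : Matrix l l ℝ) ^ k)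
      ((t ^ 2 / 2) • 1) := by
    convert hasSum_single (f := fun k => (t ^ (k + 2) / (k + 2)!) • (0 : Matrix l l ℝ) ^ k) 0
      (fun k hk => by simp [zero_pow hk]) using 1
    norm_num
  rw [exp_smul_fromBlocks_zero₂₁ t 0 B hD hV, smul_zero, NormedSpace.exp_zero, Matrix.zero_mul,
    zero_add, Matrix.smul_mul, Matrix.one_mul]

end BlockMatrices

section PowThree

variable {𝕜 R : Type*} [CommRing 𝕜] [Ring R] [Algebra 𝕜 R] {x : R} {s : 𝕜}

theorem pow_two_mul_add_one_of_pow_three_eq_smul (h : x ^ 3 = s • x) (m : ℕ) :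
    x ^ (2 * m + 1) = s ^ m • x := by
  induction m with
  | zero => simp
  | succ m ih =>
    rw [show 2 * (m + 1) + 1 = 2 * m + 1 + 2 by ring, pow_add, ih, smul_mul_assoc, ← pow_succ',
      h, smul_smul, pow_succ]

variable [TopologicalSpace 𝕜] [TopologicalSpace R] [IsTopologicalAddGroup R] [ContinuousSMul 𝕜 R]

theorem hasSum_smul_pow_of_pow_three_eq_smul (h : x ^ 3 = s • x) {c : ℕ → 𝕜} {σ₁ σ₂ : 𝕜}
    (h₁ : HasSum (fun m => c (2 * m + 1) * s ^ m) σ₁)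
    (h₂ : HasSum (fun m => c (2 * m + 2) * s ^ m) σ₂) :
    HasSum (fun k => c k • x ^ k) (c 0 • 1 + σ₁ • x + σ₂ • x ^ 2) := by
  have hodd : HasSum (fun m => c (2 * m + 1) • x ^ (2 * m + 1)) (σ₁ • x) := by
    have hterm : ∀ m, c (2 * m + 1) • x ^ (2 * m + 1) = (c (2 * m + 1) * s ^ m) • x :=
      fun m => by rw [pow_two_mul_add_one_of_pow_three_eq_smul h, smul_smul]
    simp only [hterm]
    exact h₁.smul_const x
  have heven : HasSum (fun m => c (2 * m) • x ^ (2 * m)) (c 0 • 1 + σ₂ • x ^ 2) := by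
    rw [← hasSum_nat_add_iff' 1]
    have hterm : ∀ m, c (2 * (m + 1)) • x ^ (2 * (m + 1)) = (c (2 * m + 2) * s ^ m) • x ^ 2 :=
      fun m => by
        rw [show 2 * (m + 1) = 2 * m + 1 + 1 by ring, pow_succ,
          pow_two_mul_add_one_of_pow_three_eq_smul h, smul_mul_assoc, ← sq, smul_smul]
    simp only [hterm]
    rw [Finset.sum_range_one, mul_zero, pow_zero, add_sub_cancel_left]
    exact h₂.smul_const (x ^ 2)
  rw [add_right_comm]
  exact heven.even_add_odd (f := fun k => c k • x ^ k) hodd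

end PowThree

theorem Real.hasSum_sub_sin (r : ℝ) :
    HasSum (fun m : ℕ => (-1) ^ m * r ^ (2 * m + 3) / (2 * m + 3)!) (r - Real.sin r) := by
  have h := ((hasSum_nat_add_iff' 1).mpr (Real.hasSum_sin r)).neg
  have hterm : (fun m : ℕ => (-1) ^ m * r ^ (2 * m + 3) / (2 * m + 3)!) =
      fun m => -((-1) ^ (m + 1) * r ^ (2 * (m + 1) + 1) / (2 * (m + 1) + 1)!) := by
    funext m
    rw [show 2 * (m + 1) + 1 = 2 * m + 3 by ring, pow_succ]
    ring
  have hfirst : r - Real.sin r =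
      -(Real.sin r - ∑ i ∈ Finset.range 1, (-1) ^ i * r ^ (2 * i + 1) / (2 * i + 1)!) := by
    simp
  rwa [hterm, hfirst]

theorem Real.hasSum_cos_sub (r : ℝ) :
    HasSum (fun m : ℕ => (-1) ^ m * r ^ (2 * m + 4) / (2 * m + 4)!)
      (r ^ 2 / 2 - 1 + Real.cos r) := by
  have h := (hasSum_nat_add_iff' 2).mpr (Real.hasSum_cos r)
  have hterm : (fun m : ℕ => (-1) ^ m * r ^ (2 * m + 4) / (2 * m + 4)!) =
      fun m => (-1) ^ (m + 2) * r ^ (2 * (m + 2)) / (2 * (m + 2))! := by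
    funext m
    rw [show 2 * (m + 2) = 2 * m + 4 by ring, pow_add]
    ring
  have hfirst : r ^ 2 / 2 - 1 + Real.cos r =
      Real.cos r - ∑ i ∈ Finset.range 2, (-1) ^ i * r ^ (2 * i) / (2 * i)! := by
    simp [Finset.sum_range_succ]
    ring
  rwa [hterm, hfirst]

section NegSqSmul

variable {R : Type*} [Ring R] [Algebra ℝ R] {x : R} {θ : ℝ}

theorem smul_one_add_mul_eq_of_pow_three_eq_neg_sq_smul (hθ : θ ≠ 0)
    (h : x ^ 3 = -(θ ^ 2) • x) (t : ℝ) :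
    t • 1 + ((t ^ 2 / 2) • 1 + ((θ * t - Real.sin (θ * t)) / θ ^ 3) • x
        + ((θ ^ 2 * t ^ 2 / 2 - 1 + Real.cos (θ * t)) / θ ^ 4) • x ^ 2) * x =
      t • 1 + ((1 - Real.cos (θ * t)) / θ ^ 2) • x
        + ((θ * t - Real.sin (θ * t)) / θ ^ 3) • x ^ 2 := by
  have hc : t ^ 2 / 2 - θ ^ 2 * ((θ ^ 2 * t ^ 2 / 2 - 1 + Real.cos (θ * t)) / θ ^ 4) =
      (1 - Real.cos (θ * t)) / θ ^ 2 := by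
    field_simp
    ring
  rw [← hc]
  simp only [add_mul, smul_mul_assoc, one_mul, ← sq, ← pow_succ, h]
  module

variable [TopologicalSpace R] [IsTopologicalAddGroup R] [ContinuousSMul ℝ R]

theorem hasSum_pow_add_two_div_factorial_smul_pow (hθ : θ ≠ 0) (h : x ^ 3 = -(θ ^ 2) • x)
    (t : ℝ) :
    HasSum (fun k => (t ^ (k + 2) / (k + 2)!) • x ^ k)
      ((t ^ 2 / 2) • 1 + ((θ * t - Real.sin (θ * t)) / θ ^ 3) • x
        + ((θ ^ 2 * t ^ 2 / 2 - 1 + Real.cos (θ * t)) / θ ^ 4) • x ^ 2) := by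
  have h₁ : HasSum (fun m => t ^ (2 * m + 1 + 2) / (2 * m + 1 + 2)! * (-(θ ^ 2)) ^ m)
      ((θ * t - Real.sin (θ * t)) / θ ^ 3) := by
    have hterm : (fun m => t ^ (2 * m + 1 + 2) / (2 * m + 1 + 2)! * (-(θ ^ 2)) ^ m) =
        fun m : ℕ => (-1) ^ m * (θ * t) ^ (2 * m + 3) / (2 * m + 3)! / θ ^ 3 := by
      funext m
      rw [neg_pow, ← pow_mul]
      field_simp
      ring
    rw [hterm]
    exact (Real.hasSum_sub_sin (θ * t)).div_const (θ ^ 3)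
  have h₂ : HasSum (fun m => t ^ (2 * m + 2 + 2) / (2 * m + 2 + 2)! * (-(θ ^ 2)) ^ m)
      ((θ ^ 2 * t ^ 2 / 2 - 1 + Real.cos (θ * t)) / θ ^ 4) := by
    have hterm : (fun m => t ^ (2 * m + 2 + 2) / (2 * m + 2 + 2)! * (-(θ ^ 2)) ^ m) =
        fun m : ℕ => (-1) ^ m * (θ * t) ^ (2 * m + 4) / (2 * m + 4)! / θ ^ 4 := by
      funext m
      rw [neg_pow, ← pow_mul]
      field_simp
      ring
    rw [hterm, ← mul_pow θ t 2]
    exact (Real.hasSum_cos_sub (θ * t)).div_const (θ ^ 4)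
  have hc₀ : t ^ (0 + 2) / ((0 + 2)! : ℝ) = t ^ 2 / 2 := by norm_num
  have := hasSum_smul_pow_of_pow_three_eq_smul (c := fun k => t ^ (k + 2) / (k + 2)!) h h₁ h₂
  rwa [hc₀] at this

end NegSqSmul

theorem hat_pow_three (ω : EuclideanSpace ℝ (Fin 3)) : hat ω ^ 3 = -(‖ω‖ ^ 2) • hat ω := by
  rw [EuclideanSpace.norm_eq, Real.sq_sqrt (by positivity)]
  ext i j
  fin_cases i <;> fin_cases j <;>
    simp [hat, pow_succ, Matrix.mul_apply, Fin.sum_univ_three] <;> ring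

theorem cols_add (u w u' w' : Fin 3 → ℝ) : cols u w + cols u' w' = cols (u + u') (w + w') := by
  ext i j; fin_cases j <;> simp [cols]

theorem smul_cols (c : ℝ) (u w : Fin 3 → ℝ) : c • cols u w = cols (c • u) (c • w) := by
  ext i j; fin_cases j <;> simp [cols]

theorem mul_cols (X : Matrix (Fin 3) (Fin 3) ℝ) (u w : Fin 3 → ℝ) :
    X * cols u w = cols (X *ᵥ u) (X *ᵥ w) := by
  ext i j; fin_cases j <;> simp [cols, Matrix.mul_apply, Matrix.mulVec, dotProduct]

theorem cols_mul_superdiag (u w : Fin 3 → ℝ) :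
    cols u w * (!![0, 1; 0, 0] : Matrix (Fin 2) (Fin 2) ℝ) = cols 0 u := by
  ext i j; fin_cases j <;> simp [cols, Matrix.mul_apply, Fin.sum_univ_succ]

theorem smul_cols_add_mul_cols_superdiag (t : ℝ) (V Ω : Matrix (Fin 3) (Fin 3) ℝ)
    (u : Fin 3 → ℝ) :
    t • cols u 0 + V * (Ω * cols u 0 + cols u 0 * (!![0, 1; 0, 0] : Matrix (Fin 2) (Fin 2) ℝ)) =
      cols ((t • 1 + V * Ω) *ᵥ u) (V *ᵥ u) := by
  rw [cols_mul_superdiag, mul_cols, cols_add, mul_cols, smul_cols, cols_add]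
  simp [Matrix.add_mulVec, Matrix.mulVec_mulVec, Matrix.smul_mulVec]

theorem stmt19_general (ω a : EuclideanSpace ℝ (Fin 3)) (θ : ℝ) (hθ : θ = ‖ω‖) (hθ0 : θ ≠ 0)
    (a_g : Fin 3 → ℝ)
    (Ω : Matrix (Fin 3) (Fin 3) ℝ) (hΩ : Ω = hat ω)
    (A_M : Matrix (Fin 3) (Fin 2) ℝ) (hAM : A_M = cols a_g 0)
    (A_N : Matrix (Fin 3) (Fin 2) ℝ) (hAN : A_N = cols (fun i => a i) 0)
    (B : Matrix (Fin 2) (Fin 2) ℝ) (hB : B = !![0, 1; 0, 0])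
    (M : Matrix (Fin 3 ⊕ Fin 2) (Fin 3 ⊕ Fin 2) ℝ) (hM : M = Matrix.fromBlocks 0 A_M 0 (-B))
    (N : Matrix (Fin 3 ⊕ Fin 2) (Fin 3 ⊕ Fin 2) ℝ) (hN : N = Matrix.fromBlocks Ω A_N 0 B)
    (R₀ : Matrix (Fin 3) (Fin 3) ℝ)
    (P₀ : Matrix (Fin 3) (Fin 2) ℝ)
    (X₀ : Matrix (Fin 3 ⊕ Fin 2) (Fin 3 ⊕ Fin 2) ℝ) (hX₀ : X₀ = Matrix.fromBlocks R₀ P₀ 0 1)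
    (t : ℝ)
    (P_M : Matrix (Fin 3) (Fin 2) ℝ) (hPM : P_M = cols (t • a_g) (-(t ^ 2 / 2) • a_g))
    (P_N : Matrix (Fin 3) (Fin 2) ℝ)
    (hPN : P_N = cols
      ((t • (1 : Matrix (Fin 3) (Fin 3) ℝ)
        + ((1 - Real.cos (θ * t)) / θ ^ 2) • Ω
        + ((θ * t - Real.sin (θ * t)) / θ ^ 3) • Ω ^ 2).mulVec a)
      (((t ^ 2 / 2) • (1 : Matrix (Fin 3) (Fin 3) ℝ)
        + ((θ * t - Real.sin (θ * t)) / θ ^ 3) • Ω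
        + ((θ ^ 2 * t ^ 2 / 2 - 1 + Real.cos (θ * t)) / θ ^ 4) • Ω ^ 2).mulVec a)) :
    NormedSpace.exp (t • M) * X₀ * NormedSpace.exp (t • N) =
      Matrix.fromBlocks (R₀ * NormedSpace.exp (t • Ω))
        (R₀ * P_N + (P₀ + P_M) * (1 + t • B)) 0 1 := by
  have hB2 : B * B = 0 := by
    subst hB; ext i j; fin_cases i <;> fin_cases j <;> simp [Matrix.mul_apply, Fin.sum_univ_succ]
  have hΩ3 : Ω ^ 3 = -(θ ^ 2) • Ω := by rw [hΩ, hθ, hat_pow_three]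
  have hexpM : NormedSpace.exp (t • M) = fromBlocks 1 P_M 0 (1 - t • B) := by
    rw [hM, exp_smul_fromBlocks_zero₁₁_zero₂₁ t A_M (by rw [neg_mul_neg, hB2]), smul_neg,
      ← sub_eq_add_neg, hPM, hAM, hB, Matrix.mul_neg, cols_mul_superdiag]
    congr 1
    ext i j; fin_cases j <;> simp [cols]
  have hexpN : NormedSpace.exp (t • N) =
      fromBlocks (NormedSpace.exp (t • Ω)) P_N 0 (1 + t • B) := by
    rw [hN, exp_smul_fromBlocks_zero₂₁ t Ω A_N hB2
      (hasSum_pow_add_two_div_factorial_smul_pow hθ0 hΩ3 t), hAN, hB,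
      smul_cols_add_mul_cols_superdiag, smul_one_add_mul_eq_of_pow_three_eq_neg_sq_smul hθ0 hΩ3,
      hPN]
  have hBB : (1 - t • B) * (1 + t • B) = 1 := by
    rw [Matrix.sub_mul, Matrix.one_mul, Matrix.mul_add, Matrix.mul_one, smul_mul_smul_comm, hB2,
      smul_zero, add_zero, add_sub_cancel_right]
  rw [hexpM, hX₀, hexpN, fromBlocks_multiply, fromBlocks_multiply]
  simp [hBB]

/-- The closed form of `exp(tM) · X₀ · exp(tN)` for the SINS mixed-invariant system. -/
theorem stmt19 (ω a : EuclideanSpace ℝ (Fin 3)) (θ : ℝ) (hθ : θ = ‖ω‖) (hθ0 : θ ≠ 0)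
    (g : ℝ) (a_g : Fin 3 → ℝ) (ha_g : a_g = ![0, 0, g])
    (Ω : Matrix (Fin 3) (Fin 3) ℝ) (hΩ : Ω = hat ω)
    (A_M : Matrix (Fin 3) (Fin 2) ℝ) (hAM : A_M = cols a_g 0)
    (A_N : Matrix (Fin 3) (Fin 2) ℝ) (hAN : A_N = cols (fun i => a i) 0)
    (B : Matrix (Fin 2) (Fin 2) ℝ) (hB : B = !![0, 1; 0, 0])
    (M : Matrix (Fin 3 ⊕ Fin 2) (Fin 3 ⊕ Fin 2) ℝ) (hM : M = Matrix.fromBlocks 0 A_M 0 (-B))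
    (N : Matrix (Fin 3 ⊕ Fin 2) (Fin 3 ⊕ Fin 2) ℝ) (hN : N = Matrix.fromBlocks Ω A_N 0 B)
    (R₀ : Matrix (Fin 3) (Fin 3) ℝ) (v₀ p₀ : Fin 3 → ℝ)
    (P₀ : Matrix (Fin 3) (Fin 2) ℝ) (hP₀ : P₀ = cols v₀ p₀)
    (X₀ : Matrix (Fin 3 ⊕ Fin 2) (Fin 3 ⊕ Fin 2) ℝ) (hX₀ : X₀ = Matrix.fromBlocks R₀ P₀ 0 1)
    (t : ℝ)
    (P_M : Matrix (Fin 3) (Fin 2) ℝ) (hPM : P_M = cols (t • a_g) (-(t ^ 2 / 2) • a_g))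
    (P_N : Matrix (Fin 3) (Fin 2) ℝ)
    (hPN : P_N = cols
      ((t • (1 : Matrix (Fin 3) (Fin 3) ℝ)
        + ((1 - Real.cos (θ * t)) / θ ^ 2) • Ω
        + ((θ * t - Real.sin (θ * t)) / θ ^ 3) • Ω ^ 2).mulVec a)
      (((t ^ 2 / 2) • (1 : Matrix (Fin 3) (Fin 3) ℝ)
        + ((θ * t - Real.sin (θ * t)) / θ ^ 3) • Ω
        + ((θ ^ 2 * t ^ 2 / 2 - 1 + Real.cos (θ * t)) / θ ^ 4) • Ω ^ 2).mulVec a)) :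
    NormedSpace.exp (t • M) * X₀ * NormedSpace.exp (t • N) =
      Matrix.fromBlocks (R₀ * NormedSpace.exp (t • Ω))
        (R₀ * P_N + (P₀ + P_M) * (1 + t • B)) 0 1 :=
  stmt19_general ω a θ hθ hθ0 a_g Ω hΩ A_M hAM A_N hAN B hB M hM N hN R₀ P₀ X₀ hX₀ t P_M hPM P_N hPN
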